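/- Gauge invariance of the Ernst equations: let ℰ, Λ be twice continuously differentiable complex-valued functions on an open set U ⊆ ℝ × ℝ on which the first coordinate ρ(x) := x.1 is positive, and suppose (ℰ, Λ) satisfies the Ernst equations on U. Then for any complex constant λ and real constant ω, the transformed pair ℰ' := ℰ - λ*conj(λ) + I*ω - 2*conj(λ)*Λ, Λ' := Λ + λ also satisfies the Ernst equations on U, and moreover N' := -(ℰ' + conj ℰ' + 2*Λ'*conj Λ')/2 equals N := -(ℰ + conj ℰ + 2*Λ*conj Λ)/2 and ∂ᵢℰ' + 2*conj(Λ')*∂ᵢΛ' = ∂ᵢℰ + 2*conj(Λ)*∂ᵢΛ for i = 1, 2. -/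

import Mathlib

/-!
The gauge map `ℰ ↦ ℰ - 2 conj(λ) Λ + k`, `Λ ↦ Λ + λ` with `Re k = -|λ|²` fixes `N` and the
current `∂ℰ + 2 conj(Λ) ∂Λ`, and acts linearly on first and second derivatives:
`∂ℰ ↦ ∂ℰ - 2 conj(λ) ∂Λ`, `∂Λ ↦ ∂Λ`. Hence the transformed first Ernst equation is the
first minus `2 conj(λ)` times the second, and the second one is unchanged.
-/

open Complex ComplexConjugate

/-- Partial derivative along the first coordinate direction of `ℝ × ℝ`. -/
noncomputable def pd1 {F : Type*} [NormedAddCommGroup F] [NormedSpace ℝ F]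
    (f : ℝ × ℝ → F) (x : ℝ × ℝ) : F :=
  fderiv ℝ f x (1, 0)

/-- Partial derivative along the second coordinate direction of `ℝ × ℝ`. -/
noncomputable def pd2 {F : Type*} [NormedAddCommGroup F] [NormedSpace ℝ F]
    (f : ℝ × ℝ → F) (x : ℝ × ℝ) : F :=
  fderiv ℝ f x (0, 1)

/-- The stationary and axisymmetric electrovacuum Ernst equations on `U`, for
the Ernst potential `ℰ` and electromagnetic potential `Λ`, with
`N = -(ℰ + conj ℰ + 2 Λ conj Λ)/2` and weight `ρ(x) = x.1`. -/
def ErnstEqns (U : Set (ℝ × ℝ)) (ℰ Λ : ℝ × ℝ → ℂ) : Prop :=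
  ∀ x ∈ U,
    (-(ℰ x + conj (ℰ x) + 2 * Λ x * conj (Λ x)) / 2) *
        (pd1 (fun y => (y.1 : ℂ) * pd1 ℰ y) x + pd2 (fun y => (y.1 : ℂ) * pd2 ℰ y) x)
      + (x.1 : ℂ) *
        ((pd1 ℰ x) * (pd1 ℰ x + 2 * conj (Λ x) * pd1 Λ x)
          + (pd2 ℰ x) * (pd2 ℰ x + 2 * conj (Λ x) * pd2 Λ x)) = 0 ∧
    (-(ℰ x + conj (ℰ x) + 2 * Λ x * conj (Λ x)) / 2) *
        (pd1 (fun y => (y.1 : ℂ) * pd1 Λ y) x + pd2 (fun y => (y.1 : ℂ) * pd2 Λ y) x)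
      + (x.1 : ℂ) *
        ((pd1 Λ x) * (pd1 ℰ x + 2 * conj (Λ x) * pd1 Λ x)
          + (pd2 Λ x) * (pd2 ℰ x + 2 * conj (Λ x) * pd2 Λ x)) = 0

open Filter Topology

section GaugeDerivatives

variable {E 𝔸 : Type*} [NormedAddCommGroup E] [NormedSpace ℝ E] [NormedRing 𝔸]
  [NormedAlgebra ℝ 𝔸] {f g ℰ Λ ℰ' : E → 𝔸} {x : E} {c k : 𝔸}

theorem fderiv_sub_const_mul_apply (hf : DifferentiableAt ℝ f x) (hg : DifferentiableAt ℝ g x)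
    (c : 𝔸) (v : E) :
    fderiv ℝ (fun y => f y - c * g y) x v = fderiv ℝ f x v - c * fderiv ℝ g x v := by
  rw [fderiv_fun_sub hf (hg.const_mul c), fderiv_const_mul hg]
  rfl

theorem fderiv_gauge_apply (hE' : ∀ y, ℰ' y = ℰ y - c * Λ y + k)
    (hE : DifferentiableAt ℝ ℰ x) (hL : DifferentiableAt ℝ Λ x) (v : E) :
    fderiv ℝ ℰ' x v = fderiv ℝ ℰ x v - c * fderiv ℝ Λ x v := by
  rw [funext hE', fderiv_add_const]
  exact fderiv_sub_const_mul_apply hE hL c v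

end GaugeDerivatives

section WeightedDerivatives

variable {U : Set (ℝ × ℝ)} {f ℰ Λ ℰ' : ℝ × ℝ → ℂ} {x : ℝ × ℝ} {c k : ℂ}

theorem differentiableAt_ofReal_fst_mul_fderiv (hf : ContDiffOn ℝ 2 f U) (hU : IsOpen U)
    (hx : x ∈ U) (v : ℝ × ℝ) :
    DifferentiableAt ℝ (fun y => (y.1 : ℂ) * fderiv ℝ f y v) x := by
  have hρ : ContDiff ℝ 1 (fun y : ℝ × ℝ => (y.1 : ℂ)) := ofRealCLM.contDiff.comp contDiff_fst
  have hdf : ContDiffOn ℝ 1 (fun y => fderiv ℝ f y v) U :=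
    (hf.fderiv_of_isOpen hU (by norm_num)).clm_apply contDiffOn_const
  exact (hρ.contDiffOn.mul hdf).contDiffAt (hU.mem_nhds hx) |>.differentiableAt one_ne_zero

theorem fderiv_ofReal_fst_mul_fderiv_gauge_apply (hE' : ∀ y, ℰ' y = ℰ y - c * Λ y + k)
    (hE : ContDiffOn ℝ 2 ℰ U) (hL : ContDiffOn ℝ 2 Λ U) (hU : IsOpen U) (hx : x ∈ U)
    (v w : ℝ × ℝ) :
    fderiv ℝ (fun y => (y.1 : ℂ) * fderiv ℝ ℰ' y v) x w
      = fderiv ℝ (fun y => (y.1 : ℂ) * fderiv ℝ ℰ y v) x w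
        - c * fderiv ℝ (fun y => (y.1 : ℂ) * fderiv ℝ Λ y v) x w := by
  have hnear : (fun y => (y.1 : ℂ) * fderiv ℝ ℰ' y v)
      =ᶠ[𝓝 x] fun y => (y.1 : ℂ) * fderiv ℝ ℰ y v - c * ((y.1 : ℂ) * fderiv ℝ Λ y v) := by
    filter_upwards [hU.mem_nhds hx] with y hy
    have hEy := (hE.differentiableOn two_ne_zero).differentiableAt (hU.mem_nhds hy)
    have hLy := (hL.differentiableOn two_ne_zero).differentiableAt (hU.mem_nhds hy)
    rw [fderiv_gauge_apply hE' hEy hLy]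
    ring
  rw [hnear.fderiv_eq]
  exact fderiv_sub_const_mul_apply (differentiableAt_ofReal_fst_mul_fderiv hE hU hx v)
    (differentiableAt_ofReal_fst_mul_fderiv hL hU hx v) c w

end WeightedDerivatives

section GaugeInvariants

variable {ℰ Λ ℰ' : ℝ × ℝ → ℂ} {lam k : ℂ}

theorem ernstN_gauge (hE' : ∀ y, ℰ' y = ℰ y - 2 * conj lam * Λ y + k)
    (hk : k + conj k = -(2 * lam * conj lam)) (x : ℝ × ℝ) :
    -(ℰ' x + conj (ℰ' x) + 2 * (Λ x + lam) * conj (Λ x + lam)) / 2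
      = -(ℰ x + conj (ℰ x) + 2 * Λ x * conj (Λ x)) / 2 := by
  simp only [hE', map_add, map_sub, map_mul, conj_conj, map_ofNat]
  linear_combination -hk / 2

theorem ernstCurrent_gauge (hE' : ∀ y, ℰ' y = ℰ y - 2 * conj lam * Λ y + k) {x : ℝ × ℝ}
    (hE : DifferentiableAt ℝ ℰ x) (hL : DifferentiableAt ℝ Λ x) (v : ℝ × ℝ) :
    fderiv ℝ ℰ' x v + 2 * conj (Λ x + lam) * fderiv ℝ Λ x v
      = fderiv ℝ ℰ x v + 2 * conj (Λ x) * fderiv ℝ Λ x v := by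
  rw [fderiv_gauge_apply hE' hE hL, map_add]
  ring

end GaugeInvariants

theorem ErnstEqns.gauge {U : Set (ℝ × ℝ)} {ℰ Λ ℰ' : ℝ × ℝ → ℂ} {lam k : ℂ} (hU : IsOpen U)
    (hE : ContDiffOn ℝ 2 ℰ U) (hL : ContDiffOn ℝ 2 Λ U) (h : ErnstEqns U ℰ Λ)
    (hE' : ∀ y, ℰ' y = ℰ y - 2 * conj lam * Λ y + k) (hk : k + conj k = -(2 * lam * conj lam)) :
    ErnstEqns U ℰ' (fun y => Λ y + lam) := by
  intro x hx
  obtain ⟨h₁, h₂⟩ := h x hx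
  have hEx := (hE.differentiableOn two_ne_zero).differentiableAt (hU.mem_nhds hx)
  have hLx := (hL.differentiableOn two_ne_zero).differentiableAt (hU.mem_nhds hx)
  simp only [pd1, pd2, fderiv_add_const] at h₁ h₂ ⊢
  rw [ernstN_gauge hE' hk, ernstCurrent_gauge hE' hEx hLx, ernstCurrent_gauge hE' hEx hLx,
    fderiv_gauge_apply hE' hEx hLx, fderiv_gauge_apply hE' hEx hLx,
    fderiv_ofReal_fst_mul_fderiv_gauge_apply hE' hE hL hU hx,
    fderiv_ofReal_fst_mul_fderiv_gauge_apply hE' hE hL hU hx]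
  exact ⟨by linear_combination h₁ - 2 * conj lam * h₂, h₂⟩

theorem ernst_gauge_invariance_general (U : Set (ℝ × ℝ)) (hU : IsOpen U)
    (ℰ Λ : ℝ × ℝ → ℂ) (hE : ContDiffOn ℝ 2 ℰ U) (hL : ContDiffOn ℝ 2 Λ U)
    (hErnst : ErnstEqns U ℰ Λ) (lam : ℂ) (ω : ℝ) :
    ErnstEqns U (fun x => ℰ x - lam * conj lam + I * ω - 2 * conj lam * Λ x)
      (fun x => Λ x + lam) ∧
    (∀ x : ℝ × ℝ,
      -((ℰ x - lam * conj lam + I * ω - 2 * conj lam * Λ x)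
          + conj (ℰ x - lam * conj lam + I * ω - 2 * conj lam * Λ x)
          + 2 * (Λ x + lam) * conj (Λ x + lam)) / 2
        = -(ℰ x + conj (ℰ x) + 2 * Λ x * conj (Λ x)) / 2) ∧
    (∀ x ∈ U,
      pd1 (fun y => ℰ y - lam * conj lam + I * ω - 2 * conj lam * Λ y) x
          + 2 * conj (Λ x + lam) * pd1 (fun y => Λ y + lam) x
        = pd1 ℰ x + 2 * conj (Λ x) * pd1 Λ x ∧
      pd2 (fun y => ℰ y - lam * conj lam + I * ω - 2 * conj lam * Λ y) x
          + 2 * conj (Λ x + lam) * pd2 (fun y => Λ y + lam) x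
        = pd2 ℰ x + 2 * conj (Λ x) * pd2 Λ x) := by
  set ℰ' : ℝ × ℝ → ℂ := fun x => ℰ x - lam * conj lam + I * ω - 2 * conj lam * Λ x
  have hE' : ∀ y, ℰ' y = ℰ y - 2 * conj lam * Λ y + (I * ω - lam * conj lam) := fun y => by
    simp only [ℰ']
    ring
  have hk : (I * ω - lam * conj lam) + conj (I * ω - lam * conj lam) = -(2 * lam * conj lam) := by
    simp only [map_sub, map_mul, conj_I, conj_ofReal, conj_conj]
    ring
  refine ⟨hErnst.gauge hU hE hL hE' hk, ernstN_gauge hE' hk, fun x hx => ?_⟩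
  have hEx := (hE.differentiableOn two_ne_zero).differentiableAt (hU.mem_nhds hx)
  have hLx := (hL.differentiableOn two_ne_zero).differentiableAt (hU.mem_nhds hx)
  simp only [pd1, pd2, fderiv_add_const]
  exact ⟨ernstCurrent_gauge hE' hEx hLx _, ernstCurrent_gauge hE' hEx hLx _⟩

/-- Gauge invariance of the Ernst equations: if `(ℰ, Λ)` is a `C²` solution of
the Ernst equations on the open set `U` (with `ρ > 0` on `U`), then for any
complex constant `λ` and real constant `ω` the gauge transformed pair
`ℰ' = ℰ - λ conj λ + i ω - 2 conj(λ) Λ`, `Λ' = Λ + λ` is also a solution;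
moreover `N' = N` everywhere and
`∂ᵢℰ' + 2 conj(Λ') ∂ᵢΛ' = ∂ᵢℰ + 2 conj(Λ) ∂ᵢΛ` on `U` for `i = 1, 2`. -/
theorem ernst_gauge_invariance (U : Set (ℝ × ℝ)) (hU : IsOpen U)
    (hρ : ∀ x ∈ U, 0 < x.1)
    (ℰ Λ : ℝ × ℝ → ℂ) (hE : ContDiffOn ℝ 2 ℰ U) (hL : ContDiffOn ℝ 2 Λ U)
    (hErnst : ErnstEqns U ℰ Λ) (lam : ℂ) (ω : ℝ) :
    ErnstEqns U (fun x => ℰ x - lam * conj lam + I * ω - 2 * conj lam * Λ x)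
      (fun x => Λ x + lam) ∧
    (∀ x : ℝ × ℝ,
      -((ℰ x - lam * conj lam + I * ω - 2 * conj lam * Λ x)
          + conj (ℰ x - lam * conj lam + I * ω - 2 * conj lam * Λ x)
          + 2 * (Λ x + lam) * conj (Λ x + lam)) / 2
        = -(ℰ x + conj (ℰ x) + 2 * Λ x * conj (Λ x)) / 2) ∧
    (∀ x ∈ U,
      pd1 (fun y => ℰ y - lam * conj lam + I * ω - 2 * conj lam * Λ y) x
          + 2 * conj (Λ x + lam) * pd1 (fun y => Λ y + lam) x
        = pd1 ℰ x + 2 * conj (Λ x) * pd1 Λ x ∧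
      pd2 (fun y => ℰ y - lam * conj lam + I * ω - 2 * conj lam * Λ y) x
          + 2 * conj (Λ x + lam) * pd2 (fun y => Λ y + lam) x
        = pd2 ℰ x + 2 * conj (Λ x) * pd2 Λ x) :=
  ernst_gauge_invariance_general U hU ℰ Λ hE hL hErnst lam ω
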